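/- If in the bigram graph of a string w some character x ∈ Σ has three or more distinct in-neighbors (characters a with edge a → x), then w is not uniquely decodable from its bigrams. -/

import Mathlib

/-- The multiset of bigrams (length-2 contiguous substrings) of a list. -/
def bigrams {β : Type*} (l : List β) : Multiset (β × β) :=
  (l.zip l.tail : List (β × β))

/-- The delimited form `$w$` of a string `w` over `α`, with `none` as the delimiter. -/
def delim {α : Type*} (w : List α) : List (Option α) :=
  none :: (w.map some ++ [none])

/-- The bigram encoding of a string: the multiset of bigrams of its delimited form. -/
def Phi {α : Type*} (w : List α) : Multiset (Option α × Option α) :=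
  bigrams (delim w)

/-- A string is uniquely decodable if it is the only string with its bigram encoding. -/
def UD {α : Type*} (w : List α) : Prop :=
  ∀ w' : List α, Phi w' = Phi w → w' = w

/-!
Write `w = p x q x s x r` around three occurrences of `x`. The blocks `x q x` and `x s x` both
begin and end with `x`, so exchanging them, `w' = p x s x q x r`, leaves the bigram multiset of
`$w$` unchanged. The in-neighbours of `x` at the second and third occurrences are the last
letters of `x q` and `x s`; if they differ, then `w' ≠ w`. Three distinct in-neighbours give two
occurrences after the first one with distinct in-neighbours.
-/

section Bigrams

variable {β : Type*}

@[simp]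
theorem bigrams_cons_cons (a b : β) (l : List β) :
    bigrams (a :: b :: l) = (a, b) ::ₘ bigrams (b :: l) :=
  rfl

@[simp]
theorem bigrams_singleton (a : β) : bigrams [a] = 0 :=
  rfl

theorem bigrams_append_cons (u v : List β) (y : β) :
    bigrams (u ++ y :: v) = bigrams (u ++ [y]) + bigrams (y :: v) := by
  induction u with
  | nil => simp [bigrams]
  | cons a u ih =>
    cases u with
    | nil => simp
    | cons b u => simpa [Multiset.cons_add] using ih

theorem bigrams_swap (p q s r : List β) (y : β) :
    bigrams (p ++ y :: (q ++ y :: (s ++ y :: r))) =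
      bigrams (p ++ y :: (s ++ y :: (q ++ y :: r))) := by
  have expand : ∀ q' s' : List β, bigrams (p ++ y :: (q' ++ y :: (s' ++ y :: r))) =
      bigrams (p ++ [y]) + bigrams (y :: q' ++ [y]) + bigrams (y :: s' ++ [y]) +
        bigrams (y :: r) := by
    intro q' s'
    rw [bigrams_append_cons p, ← List.cons_append, bigrams_append_cons (y :: q'),
      ← List.cons_append, bigrams_append_cons (y :: s'), add_assoc, add_assoc]
  rw [expand, expand]
  abel

end Bigrams

section Occurrences

variable {α : Type*}

theorem exists_eq_append_cons_of_length_lt {u v u' v' : List α} {x y : α}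
    (h : u ++ x :: v = u' ++ y :: v') (hlt : u.length < u'.length) :
    ∃ m, u' = u ++ x :: m := by
  rcases List.append_eq_append_iff.mp h with ⟨m, rfl, hm⟩ | ⟨m, rfl, -⟩
  · cases m with
    | nil => simp at hlt
    | cons z m => exact ⟨m, by simp_all⟩
  · simp at hlt

theorem eq_of_append_cons_eq_of_notMem {u v u' v' : List α} {x : α}
    (h : u ++ x :: v = u' ++ x :: v') (hu : x ∉ u) (hu' : x ∉ u') : u = u' := by
  rcases lt_trichotomy u.length u'.length with hlt | heq | hgt
  · obtain ⟨m, rfl⟩ := exists_eq_append_cons_of_length_lt h hlt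
    simp at hu'
  · exact (List.append_inj h heq).1
  · obtain ⟨m, rfl⟩ := exists_eq_append_cons_of_length_lt h.symm hgt
    simp at hu

end Occurrences

theorem mem_bigrams_cons_map_some_iff {α : Type*} {o a : Option α} {x : α} (w : List α) :
    (a, some x) ∈ bigrams (o :: (w.map some ++ [none])) ↔
      ∃ u v, w = u ++ x :: v ∧ (u.map some).getLastD o = a := by
  induction w generalizing o with
  | nil => simp
  | cons y w ih =>
    simp only [List.map_cons, List.cons_append, bigrams_cons_cons, Multiset.mem_cons, ih]
    constructor
    · rintro (h | ⟨u, v, rfl, rfl⟩)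
      · obtain ⟨rfl, rfl⟩ : a = o ∧ x = y := by simpa [eq_comm] using h
        exact ⟨[], w, rfl, rfl⟩
      · exact ⟨y :: u, v, rfl, List.getLastD_cons⟩
    · rintro ⟨_ | ⟨z, u⟩, v, h, rfl⟩
      · obtain ⟨rfl, rfl⟩ := List.cons.inj h
        exact Or.inl rfl
      · obtain ⟨rfl, rfl⟩ := List.cons.inj h
        exact Or.inr ⟨u, v, rfl, List.getLastD_cons.symm⟩

-- An occurrence of `x` at the start of `w` has in-neighbour `$ = none = [].getLast?`.
theorem mem_Phi_some_iff {α : Type*} {w : List α} {a : Option α} {x : α} :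
    (a, some x) ∈ Phi w ↔ ∃ u v, w = u ++ x :: v ∧ u.getLast? = a := by
  have getLastD_map_some (u : List α) : (u.map some).getLastD none = u.getLast? := by
    rw [List.getLastD_eq_getLast?, List.getLast?_map]
    cases u.getLast? <;> rfl
  simp only [Phi, delim, mem_bigrams_cons_map_some_iff, getLastD_map_some]

theorem Phi_swap {α : Type*} (p q s r : List α) (x : α) :
    Phi (p ++ x :: (q ++ x :: (s ++ x :: r))) = Phi (p ++ x :: (s ++ x :: (q ++ x :: r))) := by
  simpa [Phi, delim] using bigrams_swap (none :: p.map some) (q.map some) (s.map some)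
    (r.map some ++ [none]) (some x)

section Swap

variable {α : Type*}

theorem getLast?_eq_of_swap_eq {p q s r : List α} {x : α}
    (h : p ++ x :: (q ++ x :: (s ++ x :: r)) = p ++ x :: (s ++ x :: (q ++ x :: r))) :
    (x :: q).getLast? = (x :: s).getLast? := by
  have h' : (q ++ x :: s) ++ x :: r = (s ++ x :: q) ++ x :: r := by simpa using h
  have := congrArg List.getLast? (List.append_cancel_right h')
  rwa [List.getLast?_append_cons, List.getLast?_append_cons, eq_comm] at this

theorem not_UD_of_swap {p q s r : List α} {x : α}
    (hne : (x :: q).getLast? ≠ (x :: s).getLast?) :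
    ¬ UD (p ++ x :: (q ++ x :: (s ++ x :: r))) :=
  fun hUD => hne (getLast?_eq_of_swap_eq (hUD _ (Phi_swap p s q r x)).symm)

theorem not_UD_of_repeat_occurrences {w u v u' v' : List α} {x : α}
    (hu : w = u ++ x :: v) (hu' : w = u' ++ x :: v') (hx : x ∈ u) (hx' : x ∈ u')
    (hne : u.getLast? ≠ u'.getLast?) : ¬ UD w := by
  wlog hlt : u.length < u'.length generalizing u v u' v'
  · rcases (not_lt.mp hlt).lt_or_eq with hgt | heq
    · exact this hu' hu hx' hx hne.symm hgt
    · exact absurd (congrArg _ (List.append_inj (hu'.symm.trans hu) heq).1.symm) hne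
  obtain ⟨s, rfl⟩ := exists_eq_append_cons_of_length_lt (hu.symm.trans hu') hlt
  obtain ⟨p, q, rfl⟩ := List.append_of_mem hx
  subst hu'
  rw [List.getLast?_append_cons p, List.getLast?_append_cons (p ++ x :: q)] at hne
  simpa only [List.append_assoc, List.cons_append] using not_UD_of_swap hne

end Swap

theorem not_UD_of_three_in_neighbors_general {α : Type*} (w : List α) (x : α)
    (a b c : Option α) (hab : a ≠ b) (hac : a ≠ c) (hbc : b ≠ c)
    (ha : (a, (some x : Option α)) ∈ Phi w)
    (hb : (b, (some x : Option α)) ∈ Phi w)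
    (hc : (c, (some x : Option α)) ∈ Phi w) :
    ¬ UD w := by
  obtain ⟨ua, va, hwa, rfl⟩ := mem_Phi_some_iff.mp ha
  obtain ⟨ub, vb, hwb, rfl⟩ := mem_Phi_some_iff.mp hb
  obtain ⟨uc, vc, hwc, rfl⟩ := mem_Phi_some_iff.mp hc
  have first_unique {u v u' v' : List α} (hu : w = u ++ x :: v) (hu' : w = u' ++ x :: v')
      (hx : x ∉ u) (hx' : x ∉ u') : u.getLast? = u'.getLast? :=
    congrArg _ (eq_of_append_cons_eq_of_notMem (hu.symm.trans hu') hx hx')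
  -- Only the first occurrence of `x` has no `x` before it, so at most one of `a`, `b`, `c`
  -- precedes it.
  by_cases hxa : x ∈ ua
  · by_cases hxb : x ∈ ub
    · exact not_UD_of_repeat_occurrences hwa hwb hxa hxb hab
    · have hxc : x ∈ uc := by_contra fun hxc => hbc (first_unique hwb hwc hxb hxc)
      exact not_UD_of_repeat_occurrences hwa hwc hxa hxc hac
  · have hxb : x ∈ ub := by_contra fun hxb => hab (first_unique hwa hwb hxa hxb)
    have hxc : x ∈ uc := by_contra fun hxc => hac (first_unique hwa hwc hxa hxc)
    exact not_UD_of_repeat_occurrences hwb hwc hxb hxc hbc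

theorem not_UD_of_three_in_neighbors {α : Type*} [Fintype α] (w : List α) (x : α)
    (a b c : Option α) (hab : a ≠ b) (hac : a ≠ c) (hbc : b ≠ c)
    (ha : (a, (some x : Option α)) ∈ Phi w)
    (hb : (b, (some x : Option α)) ∈ Phi w)
    (hc : (c, (some x : Option α)) ∈ Phi w) :
    ¬ UD w :=
  not_UD_of_three_in_neighbors_general w x a b c hab hac hbc ha hb hc
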